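/- Let M be an R-bimodule and suppose there exist an R-bimodule M^∨ and R-bimodule homomorphisms ev: M^∨⊗_R M → R and db: R → M⊗_R M^∨ satisfying (ev⊗_R id_{M^∨})∘(id_{M^∨}⊗_R db) = id_{M^∨} and (id_M⊗_R ev)∘(db⊗_R id_M) = id_M (i.e., M is a left rigid object of the monoidal category of R-bimodules with left dual M^∨). Then M is finitely generated projective as a right R-module, and the map M^∨ → M* = Hom_R(M,R), φ ↦ (m ↦ ev(φ⊗m)), is an isomorphism of R-bimodules. -/

import Mathlib

/-! The zigzag identities say that the `m_i` together with the functionals `ev (φ_i ⊗ -)` form a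
finite dual basis of `M` as a right `R`-module, so `M` is a retract of `R^d`. The map
`ψ ↦ ∑ ψ(m_i) φ_i` inverts `φ ↦ ev (φ ⊗ -)`: one composite is the second zigzag identity, the
other is the first one after pulling the right-linear `ψ` through the sum. -/

set_option linter.unusedSectionVars false

open MulOpposite TensorProduct

noncomputable section

variable {k R : Type*} [CommRing k] [Ring R] [Algebra k R]
variable (A : Type*) [AddCommGroup A] [Module k A] [Module Rᵐᵒᵖ A] [SMulCommClass Rᵐᵒᵖ k A]
variable (B : Type*) [AddCommGroup B] [Module k B] [Module R B] [SMulCommClass R k B]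

def rrel : Submodule k (A ⊗[k] B) :=
  Submodule.span k {x | ∃ (a : A) (r : R) (b : B), x = (op r • a) ⊗ₜ[k] b - a ⊗ₜ[k] (r • b)}

abbrev RT := (A ⊗[k] B) ⧸ rrel (k := k) (R := R) A B

def rtmk : A →ₗ[k] B →ₗ[k] RT (k:=k) (R:=R) A B :=
  (TensorProduct.mk k A B).compr₂ (rrel (k:=k) (R:=R) A B).mkQ

variable {A B}

lemma rtmk_rel (r : R) (a : A) (b : B) :
    rtmk (k:=k) (R:=R) A B (op r • a) b = rtmk (k:=k) (R:=R) A B a (r • b) := by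
  rw [rtmk]
  simp only [LinearMap.compr₂_apply, TensorProduct.mk_apply, Submodule.mkQ_apply]
  rw [Submodule.Quotient.eq]
  exact Submodule.subset_span ⟨a, r, b, rfl⟩

variable (A B)

def rtMap {A' B' : Type*} [AddCommGroup A'] [Module k A'] [Module Rᵐᵒᵖ A']
    [AddCommGroup B'] [Module k B'] [Module R B']
    (f : A →ₗ[k] A') (g : B →ₗ[k] B')
    (hf : ∀ (r : R) (a : A), f (op r • a) = op r • f a)
    (hg : ∀ (r : R) (b : B), g (r • b) = r • g b) :
    RT (k:=k) (R:=R) A B →ₗ[k] RT (k:=k) (R:=R) A' B' :=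
  Submodule.mapQ _ _ (TensorProduct.map f g) (by
    rw [rrel, Submodule.span_le]
    rintro x ⟨a, r, b, rfl⟩
    simp only [SetLike.mem_coe, Submodule.mem_comap, map_sub, TensorProduct.map_tmul, hf, hg]
    exact Submodule.subset_span ⟨f a, r, g b, rfl⟩)

lemma rtMap_mk {A' B' : Type*} [AddCommGroup A'] [Module k A'] [Module Rᵐᵒᵖ A']
    [AddCommGroup B'] [Module k B'] [Module R B']
    (f : A →ₗ[k] A') (g : B →ₗ[k] B') (hf) (hg) (a : A) (b : B) :
    rtMap (k:=k) (R:=R) A B f g hf hg (rtmk (k:=k) (R:=R) A B a b) = rtmk (k:=k) (R:=R) A' B' (f a) (g b) := by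
  simp [rtMap, rtmk, Submodule.mapQ_apply]

section RightAction
variable [Module Rᵐᵒᵖ B] [SMulCommClass R Rᵐᵒᵖ B] [SMulCommClass Rᵐᵒᵖ k B]

def rsmulLin (s : Rᵐᵒᵖ) : B →ₗ[k] B where
  toFun := (s • ·)
  map_add' := smul_add s
  map_smul' := fun c b => (smul_comm s c b)

def rtRsmul (s : Rᵐᵒᵖ) : RT (k:=k) (R:=R) A B →ₗ[k] RT (k:=k) (R:=R) A B :=
  rtMap (k:=k) (R:=R) A B LinearMap.id (rsmulLin (k:=k) B s)
    (fun _ _ => rfl) (fun r b => (smul_comm r s b).symm)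

instance instRTModuleRop : Module Rᵐᵒᵖ (RT (k:=k) (R:=R) A B) where
  smul s x := rtRsmul (k:=k) (R:=R) A B s x
  one_smul x := by
    obtain ⟨y, rfl⟩ := Submodule.Quotient.mk_surjective _ x
    show rtRsmul (k:=k) (R:=R) A B 1 _ = _
    simp only [rtRsmul, rtMap, Submodule.mapQ_apply]
    congr 1
    have : rsmulLin (k:=k) B (1 : Rᵐᵒᵖ) = LinearMap.id := by
      ext b; simp [rsmulLin]
    rw [this]
    simp
  mul_smul s t x := by
    obtain ⟨y, rfl⟩ := Submodule.Quotient.mk_surjective _ x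
    show rtRsmul (k:=k) (R:=R) A B (s * t) _ = rtRsmul (k:=k) (R:=R) A B s (rtRsmul (k:=k) (R:=R) A B t _)
    simp only [rtRsmul, rtMap, Submodule.mapQ_apply]
    congr 1
    have : TensorProduct.map (LinearMap.id (M := A)) (rsmulLin (k:=k) B (s * t))
        = (TensorProduct.map LinearMap.id (rsmulLin (k:=k) B s)).comp
          (TensorProduct.map LinearMap.id (rsmulLin (k:=k) B t)) := by
      rw [← TensorProduct.map_comp]
      congr 1
      ext b; simp [rsmulLin, mul_smul]
    rw [this]; rfl
  smul_zero s := map_zero _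
  smul_add s x y := map_add _ x y
  add_smul s t x := by
    obtain ⟨y, rfl⟩ := Submodule.Quotient.mk_surjective _ x
    show rtRsmul (k:=k) (R:=R) A B (s + t) _ = rtRsmul (k:=k) (R:=R) A B s _ + rtRsmul (k:=k) (R:=R) A B t _
    simp only [rtRsmul, rtMap, Submodule.mapQ_apply]
    have : TensorProduct.map (LinearMap.id (M := A)) (rsmulLin (k:=k) B (s + t))
        = TensorProduct.map LinearMap.id (rsmulLin (k:=k) B s)
          + TensorProduct.map LinearMap.id (rsmulLin (k:=k) B t) := by
      have h : rsmulLin (k:=k) B (s + t) = rsmulLin (k:=k) B s + rsmulLin (k:=k) B t := by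
        ext b; simp [rsmulLin, add_smul]
      rw [h, TensorProduct.map_add_right]
    rw [this]
    simp
  zero_smul x := by
    obtain ⟨y, rfl⟩ := Submodule.Quotient.mk_surjective _ x
    show rtRsmul (k:=k) (R:=R) A B 0 _ = _
    simp only [rtRsmul, rtMap, Submodule.mapQ_apply]
    have : TensorProduct.map (LinearMap.id (M := A)) (rsmulLin (k:=k) B (0 : Rᵐᵒᵖ)) =
        TensorProduct.map LinearMap.id (0 : B →ₗ[k] B) := by
      congr 1; ext b; simp [rsmulLin]
    rw [this]
    rw [TensorProduct.map_zero_right]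
    simp

lemma rt_op_smul_mk (s : Rᵐᵒᵖ) (a : A) (b : B) :
    s • (rtmk (k:=k) (R:=R) A B a b) = rtmk (k:=k) (R:=R) A B a (s • b) := by
  show rtRsmul (k:=k) (R:=R) A B s _ = _
  exact rtMap_mk (k:=k) (R:=R) A B _ _ _ _ a b

end RightAction


section LeftAction
variable [Module R A] [SMulCommClass R Rᵐᵒᵖ A] [SMulCommClass R k A]

def lsmulLin (r : R) : A →ₗ[k] A where
  toFun := (r • ·)
  map_add' := smul_add r
  map_smul' := fun c a => (smul_comm r c a)

def rtLsmul (r : R) : RT (k:=k) (R:=R) A B →ₗ[k] RT (k:=k) (R:=R) A B :=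
  rtMap (k:=k) (R:=R) A B (lsmulLin (k:=k) A r) LinearMap.id
    (fun r' a => smul_comm r (op r') a) (fun _ _ => rfl)

instance instRTModuleR : Module R (RT (k:=k) (R:=R) A B) where
  smul r x := rtLsmul (k:=k) (R:=R) A B r x
  one_smul x := by
    obtain ⟨y, rfl⟩ := Submodule.Quotient.mk_surjective _ x
    show rtLsmul (k:=k) (R:=R) A B 1 _ = _
    simp only [rtLsmul, rtMap, Submodule.mapQ_apply]
    congr 1
    have : lsmulLin (k:=k) A (1 : R) = LinearMap.id := by ext a; simp [lsmulLin]
    rw [this]; simp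
  mul_smul s t x := by
    obtain ⟨y, rfl⟩ := Submodule.Quotient.mk_surjective _ x
    show rtLsmul (k:=k) (R:=R) A B (s * t) _ = rtLsmul (k:=k) (R:=R) A B s (rtLsmul (k:=k) (R:=R) A B t _)
    simp only [rtLsmul, rtMap, Submodule.mapQ_apply]
    congr 1
    have : TensorProduct.map (lsmulLin (k:=k) A (s * t)) (LinearMap.id (M := B))
        = (TensorProduct.map (lsmulLin (k:=k) A s) LinearMap.id).comp
          (TensorProduct.map (lsmulLin (k:=k) A t) LinearMap.id) := by
      rw [← TensorProduct.map_comp]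
      congr 1
      ext a; simp [lsmulLin, mul_smul]
    rw [this]; rfl
  smul_zero s := map_zero _
  smul_add s x y := map_add _ x y
  add_smul s t x := by
    obtain ⟨y, rfl⟩ := Submodule.Quotient.mk_surjective _ x
    show rtLsmul (k:=k) (R:=R) A B (s + t) _ = rtLsmul (k:=k) (R:=R) A B s _ + rtLsmul (k:=k) (R:=R) A B t _
    simp only [rtLsmul, rtMap, Submodule.mapQ_apply]
    have : TensorProduct.map (lsmulLin (k:=k) A (s + t)) (LinearMap.id (M := B))
        = TensorProduct.map (lsmulLin (k:=k) A s) LinearMap.id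
          + TensorProduct.map (lsmulLin (k:=k) A t) LinearMap.id := by
      have h : lsmulLin (k:=k) A (s + t) = lsmulLin (k:=k) A s + lsmulLin (k:=k) A t := by
        ext a; simp [lsmulLin, add_smul]
      rw [h, TensorProduct.map_add_left]
    rw [this]; simp
  zero_smul x := by
    obtain ⟨y, rfl⟩ := Submodule.Quotient.mk_surjective _ x
    show rtLsmul (k:=k) (R:=R) A B 0 _ = _
    simp only [rtLsmul, rtMap, Submodule.mapQ_apply]
    have : TensorProduct.map (lsmulLin (k:=k) A (0 : R)) (LinearMap.id (M := B)) =
        TensorProduct.map (0 : A →ₗ[k] A) LinearMap.id := by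
      congr 1; ext a; simp [lsmulLin]
    rw [this, TensorProduct.map_zero_left]; simp

lemma rt_smul_mk (r : R) (a : A) (b : B) :
    r • (rtmk (k:=k) (R:=R) A B a b) = rtmk (k:=k) (R:=R) A B (r • a) b := by
  show rtLsmul (k:=k) (R:=R) A B r _ = _
  exact rtMap_mk (k:=k) (R:=R) A B _ _ _ _ a b

end LeftAction
end

noncomputable section DualAction
variable {k R : Type*} [CommRing k] [Ring R] [Algebra k R]
variable (M : Type*) [AddCommGroup M] [Module R M] [Module Rᵐᵒᵖ M]
  [SMulCommClass R Rᵐᵒᵖ M]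

def lmulHom (r : R) : M →ₗ[Rᵐᵒᵖ] M where
  toFun := (r • ·)
  map_add' := smul_add r
  map_smul' := fun s x => (smul_comm r s x)

instance dualModuleRop : Module Rᵐᵒᵖ (M →ₗ[Rᵐᵒᵖ] R) where
  smul s φ := φ ∘ₗ lmulHom M (unop s)
  one_smul φ := by
    ext x; show φ ((1 : R) • x) = φ x; rw [one_smul]
  mul_smul s t φ := by
    ext x
    show φ ((unop (s * t)) • x) = φ ((unop t) • (unop s) • x)
    rw [MulOpposite.unop_mul, mul_smul]
  smul_zero s := by ext x; rfl
  smul_add s φ ψ := by ext x; rfl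
  add_smul s t φ := by
    ext x
    show φ ((unop (s + t)) • x) = φ ((unop s) • x) + φ ((unop t) • x)
    rw [MulOpposite.unop_add, add_smul, map_add]
  zero_smul φ := by
    ext x
    show φ ((0 : R) • x) = 0
    rw [zero_smul, map_zero]

lemma dual_op_smul_apply (r : R) (φ : M →ₗ[Rᵐᵒᵖ] R) (x : M) :
    (op r • φ) x = φ (r • x) := rfl

instance : SMulCommClass R Rᵐᵒᵖ (M →ₗ[Rᵐᵒᵖ] R) :=
  ⟨fun r s φ => by ext x; rfl⟩

instance : SMulCommClass Rᵐᵒᵖ k (M →ₗ[Rᵐᵒᵖ] R) :=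
  ⟨fun s c φ => by ext x; rfl⟩

end DualAction

theorem Module.finite_projective_of_sum_smul_eq {S M ι : Type*} [Ring S] [AddCommGroup M]
    [Module S M] [Fintype ι] (m : ι → M) (f : ι → M →ₗ[S] S)
    (h : ∀ x, ∑ i, f i x • m i = x) : Module.Finite S M ∧ Module.Projective S M := by
  have hsplit : Fintype.linearCombination S m ∘ₗ LinearMap.pi f = LinearMap.id :=
    LinearMap.ext fun x => by simp [Fintype.linearCombination_apply, h]
  exact ⟨.of_surjective _ (LinearMap.surjective_of_comp_eq_id _ _ hsplit),
    .of_split _ _ hsplit⟩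

section RigidDual

variable {k R : Type*} [CommRing k] [Ring R] [Algebra k R]
  {M V : Type*} [AddCommGroup M] [Module k M] [Module R M] [Module Rᵐᵒᵖ M]
  [AddCommGroup V] [Module k V] [Module R V]
  (ev : V →ₗ[k] M →ₗ[k] R) (hevl : ∀ (r : R) (φ : V) (m : M), ev (r • φ) m = r * ev φ m)
  (hevr : ∀ (s : R) (φ : V) (m : M), ev φ (op s • m) = ev φ m * s)

def evRightLinear (φ : V) : M →ₗ[Rᵐᵒᵖ] R where
  toFun := ev φ
  map_add' := map_add (ev φ)
  map_smul' s m := hevr s.unop φ m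

-- `R` as a right module over itself is `Rᵐᵒᵖ` acting on itself by left multiplication.
def evCoord (φ : V) : M →ₗ[Rᵐᵒᵖ] Rᵐᵒᵖ :=
  (opLinearEquiv Rᵐᵒᵖ).toLinearMap ∘ₗ evRightLinear ev hevr φ

def evDual : V →ₗ[R] M →ₗ[Rᵐᵒᵖ] R where
  toFun := evRightLinear ev hevr
  map_add' φ ψ := LinearMap.ext fun m => LinearMap.congr_fun (map_add ev φ ψ) m
  map_smul' r φ := LinearMap.ext fun m => hevl r φ m

@[simp]
theorem evDual_apply (φ : V) (m : M) : evDual ev hevl hevr φ m = ev φ m := rfl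

def coevContract {ι : Type*} [Fintype ι] (mi : ι → M) (φi : ι → V) :
    (M →ₗ[Rᵐᵒᵖ] R) →ₗ[R] V where
  toFun ψ := ∑ i, ψ (mi i) • φi i
  map_add' ψ χ := by simp only [LinearMap.add_apply, add_smul, Finset.sum_add_distrib]
  map_smul' r ψ := by
    simp only [LinearMap.smul_apply, smul_eq_mul, mul_smul, Finset.smul_sum, RingHom.id_apply]

theorem evDual_comp_coevContract {ι : Type*} [Fintype ι] (mi : ι → M) (φi : ι → V)
    (h1 : ∀ m : M, ∑ i, op (ev (φi i) m) • mi i = m) :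
    evDual ev hevl hevr ∘ₗ coevContract mi φi = LinearMap.id := by
  ext ψ m
  have hterm (i : ι) : ev (ψ (mi i) • φi i) m = ψ (op (ev (φi i) m) • mi i) := by
    rw [hevl, map_smul]; rfl
  simp only [LinearMap.comp_apply, coevContract, LinearMap.coe_mk, AddHom.coe_mk, map_sum,
    LinearMap.sum_apply, evDual_apply, hterm]
  rw [← map_sum, h1, LinearMap.id_apply]

theorem coevContract_comp_evDual {ι : Type*} [Fintype ι] (mi : ι → M) (φi : ι → V)
    (h2 : ∀ φ : V, ∑ i, ev φ (mi i) • φi i = φ) :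
    coevContract mi φi ∘ₗ evDual ev hevl hevr = LinearMap.id :=
  LinearMap.ext h2

def evDualEquiv {ι : Type*} [Fintype ι] (mi : ι → M) (φi : ι → V)
    (h1 : ∀ m : M, ∑ i, op (ev (φi i) m) • mi i = m)
    (h2 : ∀ φ : V, ∑ i, ev φ (mi i) • φi i = φ) : V ≃ₗ[R] M →ₗ[Rᵐᵒᵖ] R :=
  .ofLinearMap (evDual ev hevl hevr) (coevContract mi φi)
    (evDual_comp_coevContract ev hevl hevr mi φi h1)
    (coevContract_comp_evDual ev hevl hevr mi φi h2)

theorem evDual_op_smul [Module Rᵐᵒᵖ V] [SMulCommClass R Rᵐᵒᵖ M]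
    (hmid : ∀ (r : R) (φ : V) (m : M), ev (op r • φ) m = ev φ (r • m)) (s : R) (φ : V) :
    evDual ev hevl hevr (op s • φ) = op s • evDual ev hevl hevr φ :=
  LinearMap.ext (hmid s φ)

end RigidDual

noncomputable section Stmt8
variable (k R : Type*) [CommRing k] [Ring R] [Algebra k R]

theorem stmt8
    (M : Type*) [AddCommGroup M] [Module k M] [Module R M] [Module Rᵐᵒᵖ M]
    [SMulCommClass R Rᵐᵒᵖ M]
    (V : Type*) [AddCommGroup V] [Module k V] [Module R V] [Module Rᵐᵒᵖ V]
    (ev : V →ₗ[k] M →ₗ[k] R)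
    -- `ev` is defined on `M^∨ ⊗_R M`, i.e. is middle `R`-linear:
    (hmid : ∀ (r : R) (φ : V) (m : M), ev (op r • φ) m = ev φ (r • m))
    -- `ev` is an `R`-bimodule homomorphism:
    (hevl : ∀ (r : R) (φ : V) (m : M), ev (r • φ) m = r * ev φ m)
    (hevr : ∀ (s : R) (φ : V) (m : M), ev φ (op s • m) = ev φ m * s)
    (d : ℕ) (mi : Fin d → M) (φi : Fin d → V)
    -- the zigzag identities, elementwise:
    (h1 : ∀ m : M, ∑ i, op (ev (φi i) m) • mi i = m)
    (h2 : ∀ φ : V, ∑ i, ev φ (mi i) • φi i = φ) :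
    Module.Finite Rᵐᵒᵖ M ∧ Module.Projective Rᵐᵒᵖ M ∧
    ∃ e : V ≃ₗ[R] (M →ₗ[Rᵐᵒᵖ] R),
      (∀ (s : R) (φ : V), e (op s • φ) = op s • e φ) ∧
      (∀ (φ : V) (m : M), e φ m = ev φ m) := by
  obtain ⟨hfin, hproj⟩ :=
    Module.finite_projective_of_sum_smul_eq mi (fun i => evCoord ev hevr (φi i)) h1
  exact ⟨hfin, hproj, evDualEquiv ev hevl hevr mi φi h1 h2, evDual_op_smul ev hevl hevr hmid,
    fun _ _ => rfl⟩

end Stmt8
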